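/- Let the walk satisfy (H1), (H2) and (H3). Define the real polynomials α(x) = p_{−1,−1}x² + p_{0,−1}x + p_{1,−1}, β(x) = p_{−1,0}x² − x + p_{1,0}, γ(x) = p_{−1,1}x² + p_{0,1}x + p_{1,1}, and the discriminant δ(x) = β(x)² − 4·α(x)·γ(x). Then x = 1 is a root of δ of multiplicity exactly two: δ(1) = 0, δ'(1) = 0, and δ''(1) < 0. -/

import Mathlib

open Finset Polynomial

/-- The cyclic list `p_{1,1}, p_{1,0}, p_{1,-1}, p_{0,-1}, p_{-1,-1}, p_{-1,0}, p_{-1,1},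
p_{0,1}` of the eight jump probabilities, indexed by `Fin 8`. -/
def cyclicList (p : ℤ → ℤ → ℝ) : Fin 8 → ℝ :=
  ![p 1 1, p 1 0, p 1 (-1), p 0 (-1), p (-1) (-1), p (-1) 0, p (-1) 1, p 0 1]

/-- `α(x) = p_{-1,-1} x² + p_{0,-1} x + p_{1,-1}`. -/
noncomputable def alphaPoly (p : ℤ → ℤ → ℝ) : Polynomial ℝ :=
  Polynomial.C (p (-1) (-1)) * Polynomial.X ^ 2 + Polynomial.C (p 0 (-1)) * Polynomial.X +
    Polynomial.C (p 1 (-1))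

/-- `β(x) = p_{-1,0} x² − x + p_{1,0}`. -/
noncomputable def betaPoly (p : ℤ → ℤ → ℝ) : Polynomial ℝ :=
  Polynomial.C (p (-1) 0) * Polynomial.X ^ 2 - Polynomial.X + Polynomial.C (p 1 0)

/-- `γ(x) = p_{-1,1} x² + p_{0,1} x + p_{1,1}`. -/
noncomputable def gammaPoly (p : ℤ → ℤ → ℝ) : Polynomial ℝ :=
  Polynomial.C (p (-1) 1) * Polynomial.X ^ 2 + Polynomial.C (p 0 1) * Polynomial.X +
    Polynomial.C (p 1 1)

/-- The discriminant `δ(x) = β(x)² − 4 α(x) γ(x)`. -/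
noncomputable def deltaPoly (p : ℤ → ℤ → ℝ) : Polynomial ℝ :=
  betaPoly p ^ 2 - 4 * alphaPoly p * gammaPoly p


/-!
Write `m_{kl}` for the moment `E[X^k Y^l]` of one step `(X, Y)` of the walk. Evaluating `α`, `β`,
`γ` and their derivatives at `1` gives, once the total mass is `1`, `δ(1) = m_{01}²` and
`δ'(1) = 2 (m_{02} m_{10} - m_{11} m_{01} + m_{01}²)`, and with zero drift moreover
`δ''(1) = -2 (m_{20} m_{02} - m_{11}²)`, minus twice the determinant of the covariance matrix.
Grouping the eight steps into the four lines through the origin that carry them, (H2) says that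
no line carries all the mass, which makes the covariance matrix nondegenerate.
-/

lemma sum_Icc_neg_one_one {M : Type*} [AddCommMonoid M] (f : ℤ → M) :
    ∑ i ∈ Icc (-1 : ℤ) 1, f i = f (-1) + f 0 + f 1 := by
  rw [show Icc (-1 : ℤ) 1 = {-1, 0, 1} by decide, sum_insert (by decide), sum_pair (by decide),
    add_assoc]

/-- `!![u + v + d, u - v; u - v, u + v + b]` is the second moment matrix of the masses `u`, `v`,
`b`, `d` placed on the lines through `(1, 1)`, `(1, -1)`, `(0, 1)`, `(1, 0)`. -/
lemma sq_sub_lt_mul_of_add_pos {u v b d : ℝ} (hu : 0 ≤ u) (hv : 0 ≤ v) (hb : 0 ≤ b) (hd : 0 ≤ d)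
    (hvbd : 0 < v + b + d) (hubd : 0 < u + b + d) (huvd : 0 < u + v + d) (huvb : 0 < u + v + b) :
    (u - v) ^ 2 < (u + v + d) * (u + v + b) := by
  rcases hu.lt_or_eq with hu | rfl
  · nlinarith [mul_pos hu hvbd, mul_nonneg hv hb, mul_nonneg hv hd, mul_nonneg hb hd]
  rcases hv.lt_or_eq with hv | rfl
  · nlinarith [mul_pos hv hubd, mul_nonneg hb hd]
  nlinarith [mul_pos (hb.lt_of_ne' (by linarith)) (hd.lt_of_ne' (by linarith))]

noncomputable def stepMoment (p : ℤ → ℤ → ℝ) (m n : ℕ) : ℝ :=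
  ∑ i ∈ Icc (-1 : ℤ) 1, ∑ j ∈ Icc (-1 : ℤ) 1, (i : ℝ) ^ m * (j : ℝ) ^ n * p i j

section Walk

variable {p : ℤ → ℤ → ℝ}

lemma cyclicList_add_add_pos (hp_nonneg : ∀ i j : ℤ, 0 ≤ p i j)
    (hH2 : ∀ k : Fin 8, ¬ (cyclicList p k = 0 ∧ cyclicList p (k + 1) = 0 ∧
      cyclicList p (k + 2) = 0)) (k : Fin 8) :
    0 < cyclicList p k + cyclicList p (k + 1) + cyclicList p (k + 2) := by
  have hnonneg (l : Fin 8) : 0 ≤ cyclicList p l := by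
    fin_cases l <;> exact hp_nonneg _ _
  have h₀ := hnonneg k
  have h₁ := hnonneg (k + 1)
  have h₂ := hnonneg (k + 2)
  by_contra! h
  exact hH2 k ⟨by linarith, by linarith, by linarith⟩

lemma stepMoment_one_one_sq_lt (hp_nonneg : ∀ i j : ℤ, 0 ≤ p i j)
    (hH2 : ∀ k : Fin 8, ¬ (cyclicList p k = 0 ∧ cyclicList p (k + 1) = 0 ∧
      cyclicList p (k + 2) = 0)) :
    stepMoment p 1 1 ^ 2 < stepMoment p 2 0 * stepMoment p 0 2 := by
  have h0 := cyclicList_add_add_pos hp_nonneg hH2 0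
  have h1 := cyclicList_add_add_pos hp_nonneg hH2 1
  have h2 := cyclicList_add_add_pos hp_nonneg hH2 2
  have h3 := cyclicList_add_add_pos hp_nonneg hH2 3
  simp only [cyclicList, Fin.isValue, Fin.reduceAdd, Matrix.cons_val] at h0 h1 h2 h3
  have hnonneg := fun i j i' j' => add_nonneg (hp_nonneg i j) (hp_nonneg i' j')
  have key := sq_sub_lt_mul_of_add_pos (u := p 1 1 + p (-1) (-1)) (v := p 1 (-1) + p (-1) 1)
    (b := p 0 1 + p 0 (-1)) (d := p 1 0 + p (-1) 0)
    (hnonneg _ _ _ _) (hnonneg _ _ _ _) (hnonneg _ _ _ _) (hnonneg _ _ _ _) ?_ ?_ ?_ ?_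
  · simp only [stepMoment, sum_Icc_neg_one_one, Int.cast_neg, Int.cast_one, Int.cast_zero]
    linear_combination key
  all_goals linarith [hp_nonneg 1 1, hp_nonneg (-1) (-1), hp_nonneg 1 (-1), hp_nonneg (-1) 1,
    hp_nonneg 0 1, hp_nonneg 0 (-1), hp_nonneg 1 0, hp_nonneg (-1) 0]

lemma eval_one_deltaPoly (hp00 : p 0 0 = 0) (h0 : stepMoment p 0 0 = 1) :
    (deltaPoly p).eval 1 = stepMoment p 0 1 ^ 2 := by
  linear_combination (norm := skip) (stepMoment p 0 0 - 1 - 2 * stepMoment p 0 2) * h0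
  simp only [deltaPoly, alphaPoly, betaPoly, gammaPoly, eval_add, eval_sub, eval_mul, eval_pow,
    eval_C, eval_X, eval_ofNat, stepMoment, sum_Icc_neg_one_one, Int.cast_neg, Int.cast_one,
    Int.cast_zero, hp00]
  ring

lemma eval_one_derivative_deltaPoly (hp00 : p 0 0 = 0) (h0 : stepMoment p 0 0 = 1) :
    (derivative (deltaPoly p)).eval 1 = 2 * (stepMoment p 0 2 * stepMoment p 1 0 -
      stepMoment p 1 1 * stepMoment p 0 1 + stepMoment p 0 1 ^ 2) := by
  linear_combination (norm := skip)
    2 * (p (-1) 0 - p 1 0 + stepMoment p 0 0 - 1 - 2 * stepMoment p 0 2) * h0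
  simp only [deltaPoly, alphaPoly, betaPoly, gammaPoly, derivative_add, derivative_sub,
    derivative_mul, derivative_sq, derivative_C, derivative_X, derivative_ofNat, eval_add,
    eval_sub, eval_mul, eval_pow, eval_C, eval_X, eval_ofNat, eval_zero, eval_one, stepMoment,
    sum_Icc_neg_one_one, Int.cast_neg, Int.cast_one, Int.cast_zero, hp00]
  ring

lemma eval_one_derivative_derivative_deltaPoly (hp00 : p 0 0 = 0) (h0 : stepMoment p 0 0 = 1)
    (hx : stepMoment p 1 0 = 0) (hy : stepMoment p 0 1 = 0) :
    (derivative (derivative (deltaPoly p))).eval 1 =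
      2 * (stepMoment p 1 1 ^ 2 - stepMoment p 2 0 * stepMoment p 0 2) := by
  linear_combination (norm := skip)
    2 * (2 * (p (-1) 0 - p 1 0 - stepMoment p 0 2) + stepMoment p 0 0 - 1 + 2 * p (-1) 0) * h0 +
    2 * (stepMoment p 1 0 + 2 * (p (-1) (-1) - p 1 (-1) + p (-1) 1 - p 1 1) +
      3 * stepMoment p 0 2) * hx +
    2 * (stepMoment p 0 1 + 4 * p (-1) 1 - 2 * p 1 1 - 4 * p (-1) (-1) + 2 * p 1 (-1)) * hy
  simp only [deltaPoly, alphaPoly, betaPoly, gammaPoly, derivative_add, derivative_sub,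
    derivative_mul, derivative_sq, derivative_C, derivative_X, derivative_ofNat, derivative_zero,
    derivative_one, eval_add, eval_sub, eval_mul, eval_pow, eval_C, eval_X, eval_ofNat, eval_zero,
    eval_one, stepMoment, sum_Icc_neg_one_one, Int.cast_neg, Int.cast_one, Int.cast_zero, hp00]
  ring

end Walk

theorem one_is_double_root_of_discriminant (p : ℤ → ℤ → ℝ)
    -- (H1)
    (hp_nonneg : ∀ i j : ℤ, 0 ≤ p i j) (hp00 : p 0 0 = 0)
    (hp_sum : ∑ i ∈ Finset.Icc (-1 : ℤ) 1, ∑ j ∈ Finset.Icc (-1 : ℤ) 1, p i j = 1)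
    -- (H2)
    (hH2 : ∀ k : Fin 8, ¬ (cyclicList p k = 0 ∧ cyclicList p (k + 1) = 0 ∧
      cyclicList p (k + 2) = 0))
    -- (H3)
    (hH3x : ∑ i ∈ Finset.Icc (-1 : ℤ) 1, ∑ j ∈ Finset.Icc (-1 : ℤ) 1, (i : ℝ) * p i j = 0)
    (hH3y : ∑ i ∈ Finset.Icc (-1 : ℤ) 1, ∑ j ∈ Finset.Icc (-1 : ℤ) 1, (j : ℝ) * p i j = 0) :
    (deltaPoly p).eval 1 = 0 ∧ (Polynomial.derivative (deltaPoly p)).eval 1 = 0 ∧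
      (Polynomial.derivative (Polynomial.derivative (deltaPoly p))).eval 1 < 0 := by
  have h0 : stepMoment p 0 0 = 1 := by simpa [stepMoment] using hp_sum
  have hx : stepMoment p 1 0 = 0 := by simpa [stepMoment] using hH3x
  have hy : stepMoment p 0 1 = 0 := by simpa [stepMoment] using hH3y
  refine ⟨?_, ?_, ?_⟩
  · rw [eval_one_deltaPoly hp00 h0, hy]
    ring
  · rw [eval_one_derivative_deltaPoly hp00 h0, hx, hy]
    ring
  · rw [eval_one_derivative_derivative_deltaPoly hp00 h0 hx hy]
    linarith [stepMoment_one_one_sq_lt hp_nonneg hH2]
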